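/- Let G=(V,E) be a finite simple graph and let k be a positive integer. Construct the bipartite graph G'=(V',E') as follows: V' contains two vertices v^t and v^b for every v ∈ V, and v^t is adjacent to w^b if and only if w lies in the closed neighborhood N_G[v] of v in G; set thr(v^t) = deg_{G'}(v^t) for every top vertex and thr(v^b) = 1 for every bottom vertex. Then G admits a dominating set of size at most k if and only if there exists S' ⊆ V' with |S'| ≤ k such that σ[S'] = V'. -/
import Mathlib


open scoped Classical

variable {V : Type*} [Fintype V]

/-- The open neighborhood of `v` as a `Finset`. -/
noncomputable def nbr (G : SimpleGraph V) (v : V) : Finset V :=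
  Finset.univ.filter fun w => G.Adj v w

/-- The degree of a vertex. -/
noncomputable def deg (G : SimpleGraph V) (v : V) : ℕ := (nbr G v).card

/-- One round of the activation process: active vertices stay active and every vertex
having at least `thr v` active neighbors becomes active. -/
noncomputable def actStep (G : SimpleGraph V) (thr : V → ℕ) (A : Finset V) : Finset V :=
  A ∪ Finset.univ.filter fun v => thr v ≤ (nbr G v ∩ A).card

/-- `sigmaCl G thr S` = σ[S], the set of vertices active at the end of the activation
process started with seed set `S` (iterating `|V|` rounds suffices to stabilize). -/
noncomputable def sigmaCl (G : SimpleGraph V) (thr : V → ℕ) (S : Finset V) : Finset V :=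
  (actStep G thr)^[Fintype.card V] S

/-- `sigmaOp G thr S` = σ(S) = σ[S] \ S, the open activated set. -/
noncomputable def sigmaOp (G : SimpleGraph V) (thr : V → ℕ) (S : Finset V) : Finset V :=
  sigmaCl G thr S \ S

/-- The basic reduction graph G' on top copies (`Sum.inl`) and bottom copies
(`Sum.inr`) of the vertices of G: `v^t` is adjacent to `w^b` iff `w ∈ N_G[v]`. -/
noncomputable def basicRed (G : SimpleGraph V) : SimpleGraph (V ⊕ V) :=
  SimpleGraph.fromRel fun x y =>
    ∃ v w, x = Sum.inl v ∧ y = Sum.inr w ∧ (w = v ∨ G.Adj v w)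

/-- Thresholds of the basic reduction: top vertices get their degree in G', bottom
vertices get threshold 1. -/
noncomputable def basicThr (G : SimpleGraph V) : V ⊕ V → ℕ :=
  Sum.elim (fun v => deg (basicRed G) (Sum.inl v)) fun _ => 1

attribute [local instance 9999] Classical.propDecidable

lemma adj_tb (G : SimpleGraph V) (u w : V) :
    (basicRed G).Adj (Sum.inl u) (Sum.inr w) ↔ (w = u ∨ G.Adj u w) := by
  simp [basicRed]

lemma not_adj_tt (G : SimpleGraph V) (u w : V) :
    ¬ (basicRed G).Adj (Sum.inl u) (Sum.inl w) := by simp [basicRed]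

lemma not_adj_bb (G : SimpleGraph V) (u w : V) :
    ¬ (basicRed G).Adj (Sum.inr u) (Sum.inr w) := by simp [basicRed]

lemma mem_nbr (G : SimpleGraph V) (v w : V) : w ∈ nbr G v ↔ G.Adj v w := by
  simp [nbr]

lemma subset_actStep (G : SimpleGraph V) (thr : V → ℕ) (A : Finset V) :
    A ⊆ actStep G thr A := Finset.subset_union_left

lemma actStep_mono (G : SimpleGraph V) (thr : V → ℕ) : Monotone (actStep G thr) := by
  intro A B h
  apply Finset.union_subset_union h
  intro v hv
  simp only [Finset.mem_filter, Finset.mem_univ, true_and] at hv ⊢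
  exact hv.trans (Finset.card_le_card (Finset.inter_subset_inter (le_refl _) h))

lemma subset_iterate (G : SimpleGraph V) (thr : V → ℕ) (A : Finset V) (n : ℕ) :
    A ⊆ (actStep G thr)^[n] A := by
  induction n with
  | zero => simp
  | succ n ih =>
    rw [Function.iterate_succ_apply']
    exact ih.trans (subset_actStep G thr _)

/-- If a top vertex is active at round n but not a seed, all its neighbors were
active at some earlier round. -/
lemma top_helper (G : SimpleGraph V) (S' : Finset (V ⊕ V)) (n : ℕ) (u : V)
    (h : Sum.inl u ∈ (actStep (basicRed G) (basicThr G))^[n] S') :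
    Sum.inl u ∈ S' ∨ ∃ m < n,
      nbr (basicRed G) (Sum.inl u) ⊆ (actStep (basicRed G) (basicThr G))^[m] S' := by
  induction n with
  | zero => exact Or.inl h
  | succ n ih =>
    rw [Function.iterate_succ_apply'] at h
    rcases Finset.mem_union.mp h with h | h
    · rcases ih h with h | ⟨m, hm, hsub⟩
      · exact Or.inl h
      · exact Or.inr ⟨m, hm.trans (Nat.lt_succ_self n), hsub⟩
    · right
      refine ⟨n, Nat.lt_succ_self n, ?_⟩
      simp only [Finset.mem_filter, Finset.mem_univ, true_and] at h
      have hthr : (basicThr G) (Sum.inl u) = (nbr (basicRed G) (Sum.inl u)).card := rfl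
      rw [hthr] at h
      have heq := Finset.eq_of_subset_of_card_le Finset.inter_subset_left h
      intro x hx
      rw [← heq] at hx
      exact (Finset.mem_inter.mp hx).2

lemma bottom_dominated (G : SimpleGraph V) (S' : Finset (V ⊕ V)) (n : ℕ) :
    ∀ v : V, Sum.inr v ∈ (actStep (basicRed G) (basicThr G))^[n] S' →
      ∃ u, (Sum.inl u ∈ S' ∨ Sum.inr u ∈ S') ∧ (u = v ∨ G.Adj u v) := by
  induction n using Nat.strong_induction_on with
  | _ n ih =>
    intro v hv
    match n, ih, hv with
    | 0, ih, hv => exact ⟨v, Or.inr hv, Or.inl rfl⟩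
    | Nat.succ m, ih, hv =>
      rw [Function.iterate_succ_apply'] at hv
      rcases Finset.mem_union.mp hv with h | h
      · exact ih m (Nat.lt_succ_self m) v h
      · simp only [Finset.mem_filter, Finset.mem_univ, true_and] at h
        have hthr : (basicThr G) (Sum.inr v) = 1 := rfl
        rw [hthr] at h
        obtain ⟨x, hx⟩ := Finset.card_pos.mp (lt_of_lt_of_le Nat.one_pos h)
        obtain ⟨hxn, hxA⟩ := Finset.mem_inter.mp hx
        rw [mem_nbr] at hxn
        match x, hxn, hxA with
        | Sum.inr u, hxn, hxA => exact absurd hxn (not_adj_bb G v u)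
        | Sum.inl u, hxn, hxA =>
          have hadj : v = u ∨ G.Adj u v := (adj_tb G u v).mp hxn.symm
          have hdom : u = v ∨ G.Adj u v := by
            rcases hadj with h' | h'
            · exact Or.inl h'.symm
            · exact Or.inr h'
          rcases top_helper G S' m u hxA with hS | ⟨j, hj, hsub⟩
          · exact ⟨u, Or.inl hS, hdom⟩
          · have hv' : Sum.inr v ∈ (actStep (basicRed G) (basicThr G))^[j] S' := by
              apply hsub
              rw [mem_nbr]
              exact hxn.symm
            exact ih j (hj.trans (Nat.lt_succ_self m)) v hv'

/-- G has a dominating set of size at most k iff in the basic reduction graph some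
seed set of size at most k activates everything. -/
theorem stmt11 (G : SimpleGraph V) (k : ℕ) :
    (∃ D : Finset V, D.card ≤ k ∧ ∀ v : V, ∃ u ∈ D, u = v ∨ G.Adj u v) ↔
    (∃ S' : Finset (V ⊕ V), S'.card ≤ k ∧
      sigmaCl (basicRed G) (basicThr G) S' = Finset.univ) := by
  constructor
  · rintro ⟨D, hDk, hdom⟩
    refine ⟨D.image Sum.inl, (Finset.card_image_le).trans hDk, ?_⟩
    set f := actStep (basicRed G) (basicThr G) with hf
    set S' : Finset (V ⊕ V) := D.image Sum.inl with hS'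
    -- every bottom vertex active after one step
    have h1 : ∀ w : V, Sum.inr w ∈ f S' := by
      intro w
      refine Finset.mem_union.mpr (Or.inr ?_)
      simp only [Finset.mem_filter, Finset.mem_univ, true_and]
      have hthr : (basicThr G) (Sum.inr w) = 1 := rfl
      rw [hthr]
      obtain ⟨u, huD, hu⟩ := hdom w
      refine Finset.card_pos.mpr ⟨Sum.inl u, Finset.mem_inter.mpr ⟨?_, Finset.mem_image_of_mem _ huD⟩⟩
      rw [mem_nbr]
      refine ((adj_tb G u w).mpr ?_).symm
      rcases hu with h' | h'
      · exact Or.inl h'.symm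
      · exact Or.inr h'
    -- everything active after two steps
    have h2 : f (f S') = Finset.univ := by
      apply Finset.eq_univ_of_forall
      rintro (v | w)
      · refine Finset.mem_union.mpr (Or.inr ?_)
        simp only [Finset.mem_filter, Finset.mem_univ, true_and]
        have hthr : (basicThr G) (Sum.inl v) = (nbr (basicRed G) (Sum.inl v)).card := rfl
        rw [hthr]
        apply Finset.card_le_card
        intro x hx
        refine Finset.mem_inter.mpr ⟨hx, ?_⟩
        rw [mem_nbr] at hx
        match x, hx with
        | Sum.inl u, hx => exact absurd hx (not_adj_tt G v u)
        | Sum.inr u, hx => exact h1 u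
      · exact subset_actStep _ _ _ (h1 w)
    -- iterate enough times
    rcases isEmpty_or_nonempty V with hV | hV
    · have : Finset.univ (α := V ⊕ V) = ∅ := by simp
      apply Finset.eq_univ_of_forall
      intro x
      exact absurd (Finset.mem_univ x) (by rw [this]; exact Finset.notMem_empty x)
    · have hcard : 2 ≤ Fintype.card (V ⊕ V) := by
        rw [Fintype.card_sum]
        have h1 := Fintype.card_pos (α := V)
        exact Nat.add_le_add h1 h1
      obtain ⟨m, hm⟩ : ∃ m, Fintype.card (V ⊕ V) = m + 2 :=
        ⟨Fintype.card (V ⊕ V) - 2, (Nat.sub_add_cancel hcard).symm⟩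
      apply Finset.eq_univ_of_forall
      intro x
      unfold sigmaCl
      rw [hm, Function.iterate_add_apply]
      have : f^[2] S' = Finset.univ := by
        simpa [Function.iterate_succ_apply'] using h2
      rw [this]
      exact subset_iterate _ _ _ m (Finset.mem_univ x)
  · rintro ⟨S', hSk, hSσ⟩
    refine ⟨S'.image (Sum.elim id id), (Finset.card_image_le).trans hSk, ?_⟩
    intro v
    have hv : Sum.inr v ∈ (actStep (basicRed G) (basicThr G))^[Fintype.card (V ⊕ V)] S' := by
      have : Sum.inr v ∈ sigmaCl (basicRed G) (basicThr G) S' := by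
        rw [hSσ]; exact Finset.mem_univ _
      exact this
    obtain ⟨u, huS, hu⟩ := bottom_dominated G S' (Fintype.card (V ⊕ V)) v hv
    refine ⟨u, ?_, hu⟩
    rcases huS with h | h
    · exact Finset.mem_image.mpr ⟨Sum.inl u, h, rfl⟩
    · exact Finset.mem_image.mpr ⟨Sum.inr u, h, rfl⟩
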